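/- Let C₁, C₂ > 0, β > 0 and α > −1. For the internal-state space 𝓔 = ℝ with measure dμ(z) = C₁|z|^α dz and energy ε(z) = C₂|z|^β, one has for every T > 0: δ(T) = (2/(k_B T)) · ( ∫_ℝ C₂|z|^β e^{−C₂|z|^β/(k_B T)} C₁|z|^α dz ) / ( ∫_ℝ e^{−C₂|z|^β/(k_B T)} C₁|z|^α dz ) = 2(α+1)/β; in particular δ is constant and D(T) = 2(α+1)/β as well. -/

import Mathlib

/-!
Substituting `u = b x^β` with `b = C₂ / (k_B T)` turns both integrals into Gamma integrals,
`∫₀^∞ x^q e^{-b x^β} dx = b^{-(q+1)/β} Γ((q+1)/β) / β`, and the integrand is even in `z`.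
Raising the exponent from `α` to `α + β` multiplies the moment by `(α+1)/(β b)` because
`Γ(s+1) = s Γ(s)`, so the ratio in `δ(T)` is `(α+1) k_B T / β`, independent of `T`.
-/

open MeasureTheory Real

noncomputable section

/-- The number of internal degrees of freedom for the model `𝓔 = ℝ`,
`dμ(z) = C₁ |z|^α dz`, `ε(z) = C₂ |z|^β` (here `ε⁰ = 0`, so `ε̄ = ε`):
`δ(T) = (2/(k_B T)) ⬝ (∫ C₂|z|^β e^{-C₂|z|^β/(k_B T)} C₁|z|^α dz) /
  (∫ e^{-C₂|z|^β/(k_B T)} C₁|z|^α dz)`. -/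
def deltaPow (C₁ C₂ α β kB T : ℝ) : ℝ :=
  (2 / (kB * T)) *
    ((∫ z : ℝ, (C₂ * |z| ^ β) * Real.exp (-(C₂ * |z| ^ β) / (kB * T)) * (C₁ * |z| ^ α)) /
      (∫ z : ℝ, Real.exp (-(C₂ * |z| ^ β) / (kB * T)) * (C₁ * |z| ^ α)))

section Moments

variable {p q b : ℝ}

theorem integral_rpow_mul_exp_neg_mul_rpow_pos (hp : 0 < p) (hq : -1 < q) (hb : 0 < b) :
    0 < ∫ x in Set.Ioi (0 : ℝ), x ^ q * exp (-b * x ^ p) := by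
  have hs : 0 < (q + 1) / p := div_pos (by linarith) hp
  rw [integral_rpow_mul_exp_neg_mul_rpow hp hq hb]
  have := Gamma_pos_of_pos hs
  positivity

theorem integral_rpow_add_mul_exp_neg_mul_rpow (hp : 0 < p) (hq : -1 < q) (hb : 0 < b) :
    ∫ x in Set.Ioi (0 : ℝ), x ^ (q + p) * exp (-b * x ^ p) =
      (q + 1) / (p * b) * ∫ x in Set.Ioi (0 : ℝ), x ^ q * exp (-b * x ^ p) := by
  have hs : (q + p + 1) / p = (q + 1) / p + 1 := by field_simp; ring
  have hpow : b ^ (-(q + p + 1) / p) = b ^ (-(q + 1) / p) * b⁻¹ := by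
    rw [← rpow_neg_one, ← rpow_add hb]; congr 1; field_simp; ring
  rw [integral_rpow_mul_exp_neg_mul_rpow hp (by linarith) hb,
    integral_rpow_mul_exp_neg_mul_rpow hp hq hb, hs,
    Gamma_add_one (div_pos (by linarith) hp).ne', hpow]
  field_simp

end Moments

theorem deriv_id_mul_of_eventuallyEq_const {f : ℝ → ℝ} {c T : ℝ}
    (hf : f =ᶠ[nhds T] fun _ => c) : deriv (fun s => s * f s) T = c := by
  have hf' : (fun s => s * f s) =ᶠ[nhds T] fun s => s * c := hf.mono fun s hs => by simp only [hs]
  rw [hf'.deriv_eq]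
  simp

section DeltaPow

variable {C₁ C₂ α β kB T : ℝ}

theorem deltaPow_eq (hC₁ : 0 < C₁) (hC₂ : 0 < C₂) (hβ : 0 < β) (hα : -1 < α)
    (hkT : 0 < kB * T) : deltaPow C₁ C₂ α β kB T = 2 * (α + 1) / β := by
  set b := C₂ / (kB * T) with hb_def
  have hb : 0 < b := div_pos hC₂ hkT
  have hexp : ∀ x : ℝ, -(C₂ * x ^ β) / (kB * T) = -b * x ^ β := fun x => by ring
  have hden : ∫ z : ℝ, exp (-(C₂ * |z| ^ β) / (kB * T)) * (C₁ * |z| ^ α) =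
      2 * C₁ * ∫ x in Set.Ioi (0 : ℝ), x ^ α * exp (-b * x ^ β) := by
    simp_rw [hexp]
    rw [integral_comp_abs (f := fun x => exp (-b * x ^ β) * (C₁ * x ^ α)),
      mul_assoc 2 C₁, ← integral_const_mul C₁]
    congr 2 with x
    ring
  have hnum : ∫ z : ℝ, (C₂ * |z| ^ β) * exp (-(C₂ * |z| ^ β) / (kB * T)) * (C₁ * |z| ^ α) =
      2 * (C₁ * C₂) * ∫ x in Set.Ioi (0 : ℝ), x ^ (α + β) * exp (-b * x ^ β) := by
    simp_rw [hexp]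
    rw [integral_comp_abs (f := fun x => (C₂ * x ^ β) * exp (-b * x ^ β) * (C₁ * x ^ α)),
      mul_assoc 2 (C₁ * C₂), ← integral_const_mul (C₁ * C₂)]
    congr 1
    refine setIntegral_congr_fun measurableSet_Ioi fun x (hx : 0 < x) => ?_
    rw [rpow_add hx]
    ring
  have hI := integral_rpow_mul_exp_neg_mul_rpow_pos hβ hα hb
  rw [deltaPow, hnum, hden, integral_rpow_add_mul_exp_neg_mul_rpow hβ hα hb]
  generalize ∫ x in Set.Ioi (0 : ℝ), x ^ α * exp (-b * x ^ β) = I at hI ⊢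
  rw [hb_def]
  field_simp
  exact mul_div_cancel_left₀ _ hkT.ne'

end DeltaPow

/-- **Proposition (power-law models are polytropic).**
For the model `𝓔 = ℝ`, `dμ(z) = C₁|z|^α dz`, `ε(z) = C₂|z|^β` with `C₁, C₂ > 0`, `β > 0`
and `α > −1`, one has `δ(T) = 2(α+1)/β` for every `T > 0`; in particular `δ` is constant
and `D(T) = d(Tδ(T))/dT = 2(α+1)/β` as well. -/
theorem delta_pow_law
    (C₁ C₂ : ℝ) (hC₁ : 0 < C₁) (hC₂ : 0 < C₂)
    (β : ℝ) (hβ : 0 < β) (α : ℝ) (hα : -1 < α)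
    (kB : ℝ) (hkB : 0 < kB) :
    ∀ T : ℝ, 0 < T →
      deltaPow C₁ C₂ α β kB T = 2 * (α + 1) / β ∧
      deriv (fun s => s * deltaPow C₁ C₂ α β kB s) T = 2 * (α + 1) / β := by
  have hδ : ∀ T : ℝ, 0 < T → deltaPow C₁ C₂ α β kB T = 2 * (α + 1) / β :=
    fun T hT => deltaPow_eq hC₁ hC₂ hβ hα (mul_pos hkB hT)
  intro T hT
  exact ⟨hδ T hT, deriv_id_mul_of_eventuallyEq_const
    (Filter.eventually_of_mem (Ioi_mem_nhds hT) hδ)⟩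

end
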